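/- Let n ≥ 2, R > 0, let φ : (0,∞) × ℝ → (0,∞), let P, Q : (0,∞) × ℝ → ℝ be differentiable in their second variable, let σ : (0,R) → (0,∞) be differentiable, and let c : (0,R) → ℝ. For x, y ∈ ℝⁿ with x ≠ 0 and y ≠ 0, write u = |y|, r = |x|, s = ⟨x,y⟩/|y|, define G^i(x,y) = u·P(r,s)·y^i + u²·Q(r,s)·x^i, and define S(x,y) = Σ_{m=1}^n ∂G^m/∂y^m(x,y) − Σ_{m=1}^n y^m ∂/∂x^m[ln σ(|x|)]. Then S(x,y) = (n+1)·c(|x|)·u·φ(r,s) holds for all x in the punctured ball {x : 0 < |x| < R} and all y ≠ 0 if and only if (n+1)·P(r,s) + (r² − s²)·Q_s(r,s) + 2·s·Q(r,s) + f(r)·s = (n+1)·c(r)·φ(r,s) holds for all r ∈ (0,R) and all s ∈ [−r, r], where f(r) = −σ'(r)/(r·σ(r)). -/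

import Mathlib

/-!
Along a line `y + t • v` the quantities `u = ‖y‖` and `s = ⟪x, y⟫ / ‖y‖` have derivatives
`⟪y, v⟫ / u` and `(⟪x, v⟫ - s ⟪y, v⟫ / u) / u` at `t = 0`. Summing the resulting directional
derivatives of the spray over an orthonormal basis `(b m)`, every term becomes a multiple of
`∑ m, ⟪a, b m⟫ * ⟪b m, c⟫ = ⟪a, c⟫`, and one finds
`S = u ((n + 1) P + (r² - s²) Q_s + 2 s Q + f(r) s)`. Isotropy of `S` is therefore the
characteristic equation at every pair `(r, s) = (‖x‖, ⟪x, y⟫ / ‖y‖)`; by Cauchy–Schwarz these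
satisfy `|s| ≤ r`, and for `n ≥ 2` every such pair with `r > 0` is attained by vectors in a
coordinate plane.
-/

open scoped RealInnerProductSpace

section

variable {E : Type*} [NormedAddCommGroup E] [InnerProductSpace ℝ E]

theorem hasDerivAt_add_smul (y v : E) : HasDerivAt (fun t : ℝ => y + t • v) v 0 := by
  simpa using ((hasDerivAt_id (0:ℝ)).smul_const v).const_add y

theorem hasDerivAt_norm_add_smul {y : E} (hy : y ≠ 0) (v : E) :
    HasDerivAt (fun t : ℝ => ‖y + t • v‖) (⟪y, v⟫ / ‖y‖) 0 := by
  have h := (hasDerivAt_add_smul y v).norm_sq.sqrt (by simpa using hy)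
  simp only [Real.sqrt_sq (norm_nonneg _)] at h
  refine h.congr_deriv ?_
  simp only [zero_smul, add_zero]
  field_simp

theorem hasDerivAt_inner_div_norm_add_smul (x : E) {y : E} (hy : y ≠ 0) (v : E) :
    HasDerivAt (fun t : ℝ => ⟪x, y + t • v⟫ / ‖y + t • v‖)
      ((⟪x, v⟫ - ⟪x, y⟫ / ‖y‖ * (⟪y, v⟫ / ‖y‖)) / ‖y‖) 0 := by
  have h := ((hasDerivAt_const (0:ℝ) x).inner ℝ (hasDerivAt_add_smul y v)).fun_div
    (hasDerivAt_norm_add_smul hy v) (by simpa using hy)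
  refine h.congr_deriv ?_
  simp only [zero_smul, add_zero, inner_zero_left]
  field_simp

theorem hasDerivAt_log_comp_norm_add_smul {σ : ℝ → ℝ} {x : E} (hx : x ≠ 0) (v : E)
    (hσ : DifferentiableAt ℝ σ ‖x‖) (hσ0 : σ ‖x‖ ≠ 0) :
    HasDerivAt (fun t : ℝ => Real.log (σ ‖x + t • v‖))
      (deriv σ ‖x‖ * (⟪x, v⟫ / ‖x‖) / σ ‖x‖) 0 := by
  have h := hσ.hasDerivAt.comp_of_eq 0 (hasDerivAt_norm_add_smul hx v) (by simp)
  simpa using h.log (by simpa using hσ0)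

/-- For `e` the `i`-th basis vector this is the spray coefficient `G^i`. -/
noncomputable def sphericalSpray (P Q : ℝ → ℝ → ℝ) (e x y : E) : ℝ :=
  ‖y‖ * P ‖x‖ (⟪x, y⟫ / ‖y‖) * ⟪e, y⟫ + ‖y‖ ^ 2 * Q ‖x‖ (⟪x, y⟫ / ‖y‖) * ⟪e, x⟫

theorem hasDerivAt_sphericalSpray_add_smul {P Q : ℝ → ℝ → ℝ} {r s : ℝ} (e : E) {x y : E}
    (hr : ‖x‖ = r) (hs : ⟪x, y⟫ / ‖y‖ = s) (hy : y ≠ 0) (v : E)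
    (hP : DifferentiableAt ℝ (P r) s) (hQ : DifferentiableAt ℝ (Q r) s) :
    HasDerivAt (fun t : ℝ => sphericalSpray P Q e x (y + t • v))
      ((⟪y, v⟫ / ‖y‖ * P r s + ‖y‖ * (deriv (P r) s * ((⟪x, v⟫ - s * (⟪y, v⟫ / ‖y‖)) / ‖y‖)))
          * ⟪e, y⟫
        + ‖y‖ * P r s * ⟪e, v⟫
        + (2 * ⟪y, v⟫ * Q r s + ‖y‖ ^ 2 * (deriv (Q r) s * ((⟪x, v⟫ - s * (⟪y, v⟫ / ‖y‖)) / ‖y‖)))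
          * ⟪e, x⟫) 0 := by
  subst hr hs
  have hs' := hasDerivAt_inner_div_norm_add_smul x hy v
  have hp := hP.hasDerivAt.comp_of_eq 0 hs' (by simp)
  have hq := hQ.hasDerivAt.comp_of_eq 0 hs' (by simp)
  have hey := (hasDerivAt_const (0:ℝ) e).inner ℝ (hasDerivAt_add_smul y v)
  have h := ((hasDerivAt_norm_add_smul hy v).mul hp).mul hey |>.add
    (((hasDerivAt_add_smul y v).norm_sq.mul hq).mul_const ⟪e, x⟫)
  refine h.congr_deriv ?_
  simp only [zero_smul, add_zero, inner_zero_left, Function.comp_apply, Pi.mul_apply]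

variable {ι : Type*} [Fintype ι]

theorem sum_deriv_sphericalSpray (b : OrthonormalBasis ι ℝ E) {P Q : ℝ → ℝ → ℝ} {r s : ℝ}
    {x y : E} (hr : ‖x‖ = r) (hs : ⟪x, y⟫ / ‖y‖ = s) (hy : y ≠ 0)
    (hP : DifferentiableAt ℝ (P r) s) (hQ : DifferentiableAt ℝ (Q r) s) :
    ∑ m, deriv (fun t : ℝ => sphericalSpray P Q (b m) x (y + t • b m)) 0
      = ‖y‖ * ((Fintype.card ι + 1) * P r s + (r ^ 2 - s ^ 2) * deriv (Q r) s + 2 * s * Q r s) := by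
  have hterm : ∀ m, deriv (fun t : ℝ => sphericalSpray P Q (b m) x (y + t • b m)) 0
      = (P r s - s * deriv (P r) s) / ‖y‖ * (⟪y, b m⟫ * ⟪b m, y⟫)
        + deriv (P r) s * (⟪x, b m⟫ * ⟪b m, y⟫)
        + (2 * Q r s - s * deriv (Q r) s) * (⟪y, b m⟫ * ⟪b m, x⟫)
        + ‖y‖ * deriv (Q r) s * (⟪x, b m⟫ * ⟪b m, x⟫) + ‖y‖ * P r s := by
    intro m
    rw [(hasDerivAt_sphericalSpray_add_smul (b m) hr hs hy (b m) hP hQ).deriv,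
      real_inner_self_eq_norm_sq, b.orthonormal.1 m]
    field_simp
    ring
  have hxy : ⟪x, y⟫ = s * ‖y‖ := by rw [← hs]; field_simp
  simp only [hterm, Finset.sum_add_distrib, ← Finset.mul_sum, b.sum_inner_mul_inner,
    Finset.sum_const, Finset.card_univ, nsmul_eq_mul, real_inner_comm x y, hxy,
    real_inner_self_eq_norm_sq, hr]
  field_simp
  ring

theorem sum_inner_mul_deriv_log_norm_add_smul (b : OrthonormalBasis ι ℝ E) {σ : ℝ → ℝ} {x : E}
    (hx : x ≠ 0) (y : E) (hσ : DifferentiableAt ℝ σ ‖x‖) (hσ0 : σ ‖x‖ ≠ 0) :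
    ∑ m, ⟪b m, y⟫ * deriv (fun t : ℝ => Real.log (σ ‖x + t • b m‖)) 0
      = deriv σ ‖x‖ / (‖x‖ * σ ‖x‖) * ⟪x, y⟫ := by
  simp only [fun m => (hasDerivAt_log_comp_norm_add_smul hx (b m) hσ hσ0).deriv]
  rw [← b.sum_inner_mul_inner x y, Finset.mul_sum]
  refine Finset.sum_congr rfl fun m _ => ?_
  field_simp

noncomputable def sphericalSCurvature (b : OrthonormalBasis ι ℝ E) (P Q : ℝ → ℝ → ℝ)
    (σ : ℝ → ℝ) (x y : E) : ℝ :=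
  ∑ m, deriv (fun t : ℝ => sphericalSpray P Q (b m) x (y + t • b m)) 0
    - ∑ m, ⟪b m, y⟫ * deriv (fun t : ℝ => Real.log (σ ‖x + t • b m‖)) 0

theorem sphericalSCurvature_eq (b : OrthonormalBasis ι ℝ E) {P Q : ℝ → ℝ → ℝ} {σ : ℝ → ℝ}
    {r s : ℝ} {x y : E} (hr : ‖x‖ = r) (hs : ⟪x, y⟫ / ‖y‖ = s) (hx : x ≠ 0) (hy : y ≠ 0)
    (hP : DifferentiableAt ℝ (P r) s) (hQ : DifferentiableAt ℝ (Q r) s)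
    (hσ : DifferentiableAt ℝ σ r) (hσ0 : σ r ≠ 0) :
    sphericalSCurvature b P Q σ x y = ‖y‖ * ((Fintype.card ι + 1) * P r s
      + (r ^ 2 - s ^ 2) * deriv (Q r) s + 2 * s * Q r s + -deriv σ r / (r * σ r) * s) := by
  subst hr
  rw [sphericalSCurvature, sum_deriv_sphericalSpray b rfl hs hy hP hQ,
    sum_inner_mul_deriv_log_norm_add_smul b hx y hσ hσ0, ← hs]
  field_simp
  ring

theorem OrthonormalBasis.exists_norm_eq_inner_div_norm_eq [Nontrivial ι]
    (b : OrthonormalBasis ι ℝ E) {r s : ℝ}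
    (hr : 0 < r) (hs : |s| ≤ r) :
    ∃ x y : E, ‖x‖ = r ∧ y ≠ 0 ∧ ⟪x, y⟫ / ‖y‖ = s := by
  obtain ⟨i, j, hij⟩ := exists_pair_ne ι
  have hbi : ⟪b i, b i⟫ = 1 := by rw [real_inner_self_eq_norm_sq, b.orthonormal.1 i]; norm_num
  have hbj : ⟪b j, b j⟫ = 1 := by rw [real_inner_self_eq_norm_sq, b.orthonormal.1 j]; norm_num
  have hbij : ⟪b i, b j⟫ = 0 := b.orthonormal.2 hij
  have hbji : ⟪b j, b i⟫ = 0 := b.orthonormal.2 hij.symm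
  have hw : √(r ^ 2 - s ^ 2) ^ 2 = r ^ 2 - s ^ 2 :=
    Real.sq_sqrt (by nlinarith [sq_abs s, abs_nonneg s])
  set y := s • b i + √(r ^ 2 - s ^ 2) • b j
  have hy : ‖y‖ = r := by
    rw [← sq_eq_sq₀ (norm_nonneg _) hr.le, ← real_inner_self_eq_norm_sq]
    simp only [y, inner_add_left, inner_add_right, real_inner_smul_left, real_inner_smul_right,
      hbi, hbj, hbij, hbji]
    linear_combination hw
  refine ⟨r • b i, y, by simp [norm_smul, b.orthonormal.1 i, hr.le], ?_, ?_⟩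
  · exact norm_ne_zero_iff.mp (hy ▸ hr.ne')
  · rw [hy]
    simp only [y, inner_add_right, real_inner_smul_left, real_inner_smul_right, hbi, hbij,
      mul_zero, add_zero]
    field_simp

end

theorem spherically_symmetric_isotropic_S_curvature_characterization_general
    (n : ℕ) (hn : 2 ≤ n) (R : ℝ)
    (φ P Q : ℝ → ℝ → ℝ) (σ c : ℝ → ℝ)
    (hP : ∀ r > (0:ℝ), Differentiable ℝ (P r))
    (hQ : ∀ r > (0:ℝ), Differentiable ℝ (Q r))
    (hσpos : ∀ r ∈ Set.Ioo (0:ℝ) R, 0 < σ r)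
    (hσdiff : ∀ r ∈ Set.Ioo (0:ℝ) R, DifferentiableAt ℝ σ r) :
    let G : Fin n → EuclideanSpace ℝ (Fin n) → EuclideanSpace ℝ (Fin n) → ℝ :=
      fun i x y => ‖y‖ * P ‖x‖ (⟪x, y⟫ / ‖y‖) * y i
        + ‖y‖ ^ 2 * Q ‖x‖ (⟪x, y⟫ / ‖y‖) * x i
    let S : EuclideanSpace ℝ (Fin n) → EuclideanSpace ℝ (Fin n) → ℝ :=
      fun x y =>
        (∑ m, deriv (fun t : ℝ => G m x (y + t • EuclideanSpace.single m (1:ℝ))) 0)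
          - (∑ m, y m *
              deriv (fun t : ℝ => Real.log (σ ‖x + t • EuclideanSpace.single m (1:ℝ)‖)) 0)
    let f : ℝ → ℝ := fun r => -(deriv σ r) / (r * σ r)
    ((∀ x y : EuclideanSpace ℝ (Fin n), 0 < ‖x‖ → ‖x‖ < R → y ≠ 0 →
        S x y = (n + 1) * c ‖x‖ * (‖y‖ * φ ‖x‖ (⟪x, y⟫ / ‖y‖)))
      ↔ (∀ r ∈ Set.Ioo (0:ℝ) R, ∀ s ∈ Set.Icc (-r) r,
          (n + 1) * P r s + (r ^ 2 - s ^ 2) * deriv (Q r) s + 2 * s * Q r s + f r * s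
            = (n + 1) * c r * φ r s)) := by
  intro G S f
  have hS : ∀ x y, S x y = sphericalSCurvature (EuclideanSpace.basisFun (Fin n) ℝ) P Q σ x y := by
    intro x y
    simp [S, G, sphericalSCurvature, sphericalSpray, EuclideanSpace.inner_single_left]
  have hSeq : ∀ x y, 0 < ‖x‖ → ‖x‖ < R → y ≠ 0 → S x y = ‖y‖ * ((n + 1) * P ‖x‖ (⟪x, y⟫ / ‖y‖)
      + (‖x‖ ^ 2 - (⟪x, y⟫ / ‖y‖) ^ 2) * deriv (Q ‖x‖) (⟪x, y⟫ / ‖y‖)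
      + 2 * (⟪x, y⟫ / ‖y‖) * Q ‖x‖ (⟪x, y⟫ / ‖y‖) + f ‖x‖ * (⟪x, y⟫ / ‖y‖)) := by
    intro x y hx hxR hy
    rw [hS, sphericalSCurvature_eq _ rfl rfl (norm_pos_iff.mp hx) hy (hP _ hx _) (hQ _ hx _)
      (hσdiff _ ⟨hx, hxR⟩) (hσpos _ ⟨hx, hxR⟩).ne', Fintype.card_fin]
  have : Nontrivial (Fin n) := Fin.nontrivial_iff_two_le.mpr hn
  constructor
  · rintro h r ⟨hr, hrR⟩ s hs
    obtain ⟨x, y, rfl, hy, rfl⟩ :=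
      (EuclideanSpace.basisFun (Fin n) ℝ).exists_norm_eq_inner_div_norm_eq hr (abs_le.mpr hs)
    have := (hSeq x y hr hrR hy).symm.trans (h x y hr hrR hy)
    rw [mul_left_comm] at this
    exact mul_left_cancel₀ (norm_ne_zero_iff.mpr hy) this
  · intro h x y hx hxR hy
    have hs : |⟪x, y⟫ / ‖y‖| ≤ ‖x‖ := by
      rw [abs_div, abs_norm, div_le_iff₀ (norm_pos_iff.mpr hy)]
      exact abs_real_inner_le_norm x y
    rw [hSeq x y hx hxR hy, h _ ⟨hx, hxR⟩ _ (abs_le.mp hs)]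
    ring

/-- Theorem 2.4: a spherically symmetric Finsler metric `F = u φ(r,s)` with spray
coefficients `G^i = u P y^i + u² Q x^i` has isotropic S-curvature
`S = (n+1) c(|x|) F` with respect to the spherically symmetric volume form `σ(|x|)dx`
on the punctured ball of radius `R` if and only if
`(n+1)P + (r²-s²)Q_s + 2sQ + f(r)s = (n+1) c(r) φ(r,s)` for all `0 < r < R`, `|s| ≤ r`. -/
theorem spherically_symmetric_isotropic_S_curvature_characterization
    (n : ℕ) (hn : 2 ≤ n) (R : ℝ) (hR : 0 < R)
    (φ P Q : ℝ → ℝ → ℝ) (σ c : ℝ → ℝ)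
    (hφpos : ∀ r > (0:ℝ), ∀ s : ℝ, 0 < φ r s)
    (hP : ∀ r > (0:ℝ), Differentiable ℝ (P r))
    (hQ : ∀ r > (0:ℝ), Differentiable ℝ (Q r))
    (hσpos : ∀ r ∈ Set.Ioo (0:ℝ) R, 0 < σ r)
    (hσdiff : ∀ r ∈ Set.Ioo (0:ℝ) R, DifferentiableAt ℝ σ r) :
    let G : Fin n → EuclideanSpace ℝ (Fin n) → EuclideanSpace ℝ (Fin n) → ℝ :=
      fun i x y => ‖y‖ * P ‖x‖ (⟪x, y⟫ / ‖y‖) * y i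
        + ‖y‖ ^ 2 * Q ‖x‖ (⟪x, y⟫ / ‖y‖) * x i
    let S : EuclideanSpace ℝ (Fin n) → EuclideanSpace ℝ (Fin n) → ℝ :=
      fun x y =>
        (∑ m, deriv (fun t : ℝ => G m x (y + t • EuclideanSpace.single m (1:ℝ))) 0)
          - (∑ m, y m *
              deriv (fun t : ℝ => Real.log (σ ‖x + t • EuclideanSpace.single m (1:ℝ)‖)) 0)
    let f : ℝ → ℝ := fun r => -(deriv σ r) / (r * σ r)
    ((∀ x y : EuclideanSpace ℝ (Fin n), 0 < ‖x‖ → ‖x‖ < R → y ≠ 0 →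
        S x y = (n + 1) * c ‖x‖ * (‖y‖ * φ ‖x‖ (⟪x, y⟫ / ‖y‖)))
      ↔ (∀ r ∈ Set.Ioo (0:ℝ) R, ∀ s ∈ Set.Icc (-r) r,
          (n + 1) * P r s + (r ^ 2 - s ^ 2) * deriv (Q r) s + 2 * s * Q r s + f r * s
            = (n + 1) * c r * φ r s)) :=
  spherically_symmetric_isotropic_S_curvature_characterization_general n hn R φ P Q σ c hP hQ hσpos
    hσdiff
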